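/- For every z ∈ 𝔻, the iterates Fⁿ(z) converge to 0 as n → ∞. -/

import Mathlib

/-!
`F` acts on moduli by the Möbius map `r ↦ e⁻¹ r / (e⁻¹ r - r + 1)`, which in terms of the odds
ratio `r / (1 - r)` is just multiplication by `e⁻¹`. Hence the odds ratio of `‖Fⁿ z‖` is
`e⁻ⁿ ‖z‖ / (1 - ‖z‖)`, and it dominates `‖Fⁿ z‖`.
-/

/-- The open unit disk in `ℂ`. -/
def unitDisk : Set ℂ := {z : ℂ | ‖z‖ < 1}

/-- The map `f` on the open unit disk. -/
noncomputable def mapF (z : ℂ) : ℂ :=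
  if z = 0 then 0 else
    (Real.exp 1 * z / (Real.exp 1 * ‖z‖ - ‖z‖ + 1)) *
      Complex.exp (2 * Real.pi * Complex.I *
        Real.log (‖z‖ / (1 - ‖z‖)))

/-- The map `F`, the inverse of `f`, on the open unit disk. -/
noncomputable def mapFinv (w : ℂ) : ℂ :=
  if w = 0 then 0 else
    ((Real.exp 1)⁻¹ * w / ((Real.exp 1)⁻¹ * ‖w‖ - ‖w‖ + 1)) *
      Complex.exp (-(2 * Real.pi * Complex.I *
        Real.log (‖w‖ / (1 - ‖w‖))))

open Filter Topology Real

noncomputable def oddsRatio (r : ℝ) : ℝ := r / (1 - r)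

lemma le_oddsRatio {r : ℝ} (hr₀ : 0 ≤ r) (hr₁ : r < 1) : r ≤ oddsRatio r :=
  le_div_self hr₀ (by linarith) (by linarith)

section Mobius

variable {a r : ℝ}

lemma mobius_denom_pos (ha : 0 ≤ a) (hr₀ : 0 ≤ r) (hr₁ : r < 1) : 0 < a * r - r + 1 := by
  nlinarith

lemma mobius_lt_one (ha : 0 ≤ a) (hr₀ : 0 ≤ r) (hr₁ : r < 1) : a * r / (a * r - r + 1) < 1 := by
  rw [div_lt_one (mobius_denom_pos ha hr₀ hr₁)]
  linarith

lemma oddsRatio_mobius (ha : 0 ≤ a) (hr₀ : 0 ≤ r) (hr₁ : r < 1) :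
    oddsRatio (a * r / (a * r - r + 1)) = a * oddsRatio r := by
  have hd := mobius_denom_pos ha hr₀ hr₁
  unfold oddsRatio
  rw [one_sub_div hd.ne', div_div_div_cancel_right₀ hd.ne',
    show a * r - r + 1 - a * r = 1 - r by ring, mul_div_assoc]

end Mobius

lemma norm_mapFinv {w : ℂ} (hw : ‖w‖ < 1) :
    ‖mapFinv w‖ = (exp 1)⁻¹ * ‖w‖ / ((exp 1)⁻¹ * ‖w‖ - ‖w‖ + 1) := by
  rcases eq_or_ne w 0 with rfl | hw₀
  · simp [mapFinv]
  have hd := mobius_denom_pos (inv_nonneg.2 (exp_pos 1).le) (norm_nonneg w) hw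
  have hcast : ((exp 1)⁻¹ * ‖w‖ - ‖w‖ + 1 : ℂ) = (((exp 1)⁻¹ * ‖w‖ - ‖w‖ + 1 : ℝ) : ℂ) := by
    push_cast; ring
  have hrot : ‖Complex.exp (-(2 * π * Complex.I * log (‖w‖ / (1 - ‖w‖))))‖ = 1 := by
    simp [Complex.norm_exp]
  rw [mapFinv, if_neg hw₀, norm_mul, hrot, norm_div, norm_mul, hcast,
    Complex.norm_real, Complex.norm_real, Real.norm_of_nonneg hd.le,
    Real.norm_of_nonneg (inv_nonneg.2 (exp_pos 1).le), mul_one]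

lemma norm_mapFinv_lt_one {w : ℂ} (hw : ‖w‖ < 1) : ‖mapFinv w‖ < 1 := by
  rw [norm_mapFinv hw]
  exact mobius_lt_one (inv_nonneg.2 (exp_pos 1).le) (norm_nonneg w) hw

lemma oddsRatio_norm_mapFinv {w : ℂ} (hw : ‖w‖ < 1) :
    oddsRatio ‖mapFinv w‖ = (exp 1)⁻¹ * oddsRatio ‖w‖ := by
  rw [norm_mapFinv hw]
  exact oddsRatio_mobius (inv_nonneg.2 (exp_pos 1).le) (norm_nonneg w) hw

lemma oddsRatio_norm_iterate_mapFinv {z : ℂ} (hz : ‖z‖ < 1) (n : ℕ) :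
    ‖mapFinv^[n] z‖ < 1 ∧ oddsRatio ‖mapFinv^[n] z‖ = (exp 1)⁻¹ ^ n * oddsRatio ‖z‖ := by
  induction n with
  | zero => simp [hz]
  | succ n ih =>
    rw [Function.iterate_succ_apply', oddsRatio_norm_mapFinv ih.1, ih.2, pow_succ']
    exact ⟨norm_mapFinv_lt_one ih.1, by ring⟩

/-- The iterates of `F` converge to `0` on the open unit disk. -/
theorem stmt_14 :
    ∀ z ∈ unitDisk, Filter.Tendsto (fun n : ℕ => mapFinv^[n] z) Filter.atTop (nhds 0) := by
  intro z hz
  rw [tendsto_zero_iff_norm_tendsto_zero]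
  have hlim : Tendsto (fun n : ℕ => (exp 1)⁻¹ ^ n * oddsRatio ‖z‖) atTop (𝓝 0) := by
    simpa using (tendsto_pow_atTop_nhds_zero_of_lt_one (inv_nonneg.2 (exp_pos 1).le)
      (inv_lt_one_of_one_lt₀ (one_lt_exp_iff.2 one_pos))).mul_const (oddsRatio ‖z‖)
  refine squeeze_zero (fun n => norm_nonneg _) (fun n => ?_) hlim
  obtain ⟨hn, hodds⟩ := oddsRatio_norm_iterate_mapFinv hz n
  exact hodds ▸ le_oddsRatio (norm_nonneg _) hn
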